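/- arXiv:1811.05552 — 2 statements merged into one kernel-verified Lean document; each statement's English description precedes it below -/
import Mathlib

section
/- Let (C, d₀) and (C, d) be two differentials on a finite-dimensional filtered vector space (C, 𝒜) over the Novikov field Λ_univ, both filtered (d*𝒜 ≤ 𝒜, d₀*𝒜 ≤ 𝒜), with d = d₀ + M where the filtration shift 𝒜(M) := inf_v (𝒜(v) - 𝒜(M(v))) satisfies 𝒜(M) ≥ A for some A > 0. Then the bar-length spectra of (C, d₀) and (C, d) coincide below A: for each k, β_k(C, d) < A implies β_k(C, d₀) = β_k(C, d), and conversely. -/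
/-- A family `e` is *orthogonal* for a filtration function `𝒜` and valuation `ν`. -/
def IsOrthFamily {Λ V ι : Type*} [Field Λ] [AddCommGroup V] [Module Λ V] [Fintype ι]
    (ν : Λ → EReal) (𝒜 : V → EReal) (e : ι → V) : Prop :=
  ∀ lam : ι → Λ,
    𝒜 (∑ i, lam i • e i) = Finset.univ.sup fun i => 𝒜 (e i) - ν (lam i)

/-- The multiset `S` of real numbers is the finite bar-length spectrum of the filtered
complex `(V, d, 𝒜)`: there is an orthogonal Usher–Zhang normal-form basis
`(ξ₁,…,ξ_B, ζ₁,…,ζ_K, η₁,…,η_K)` with `d ξᵢ = 0`, `d ζⱼ = ηⱼ`, and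
`S = {𝒜(ζⱼ) - 𝒜(ηⱼ)}`. -/
def IsBarSpectrum {Λ V : Type*} [Field Λ] [AddCommGroup V] [Module Λ V]
    (ν : Λ → EReal) (𝒜 : V → EReal) (d : V →ₗ[Λ] V) (S : Multiset ℝ) : Prop :=
  ∃ (B K : ℕ) (e : Fin B ⊕ Fin K ⊕ Fin K → V) (β : Fin K → ℝ),
    LinearIndependent Λ e ∧
    Submodule.span Λ (Set.range e) = ⊤ ∧
    IsOrthFamily ν 𝒜 e ∧
    (∀ i : Fin B, d (e (Sum.inl i)) = 0) ∧
    (∀ j : Fin K, d (e (Sum.inr (Sum.inl j))) = e (Sum.inr (Sum.inr j))) ∧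
    (∀ j : Fin K,
      𝒜 (e (Sum.inr (Sum.inl j))) - 𝒜 (e (Sum.inr (Sum.inr j))) = (β j : EReal)) ∧
    S = Finset.univ.val.map β

/-!
For `t : ℝ`, the number of finite bars of length `≤ t` is the largest dimension of a subspace `U`
with `𝒜 u ≤ 𝒜 (d u) + t` for all nonzero `u ∈ U`: in a Usher–Zhang basis the span of the `ζⱼ`
with `βⱼ ≤ t` is such a subspace, and on any such subspace the coordinates along these `ζⱼ` are
injective. For `t < A` the perturbation `M = d - d₀` lowers filtration by at least `A > t`, so
when `𝒜 u ≤ 𝒜 (d u) + t` the term `M u` lies strictly below `d u` and `𝒜 (d u) ≤ 𝒜 (d₀ u)`.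
Hence `d` and `d₀` have the same such subspaces, the same number of bars of length `≤ t` for
every `t < A`, and so the same bars below `A`.
-/

lemma Finset.exists_lt_forall_lt_imp_le (s : Finset ℝ) (a : ℝ) :
    ∃ t < a, ∀ x ∈ s, x < a → x ≤ t := by
  set s' := insert (a - 1) (s.filter (· < a))
  refine ⟨s'.max' (insert_nonempty _ _), ?_,
    fun x hx hxa => s'.le_max' x (mem_insert_of_mem (mem_filter.2 ⟨hx, hxa⟩))⟩
  rcases mem_insert.1 (s'.max'_mem (insert_nonempty _ _)) with h | h
  · rw [h]; linarith
  · exact (mem_filter.1 h).2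

namespace Multiset

lemma card_filter_le_eq_add_count {R : Multiset ℝ} {t a : ℝ} (hta : t < a)
    (ht : ∀ x ∈ R, x < a → x ≤ t) :
    (R.filter (· ≤ a)).card = (R.filter (· ≤ t)).card + R.count a := by
  have hor : R.filter (fun x => x ≤ t ∨ a = x) = R.filter (· ≤ a) :=
    filter_congr fun x hx => ⟨by rintro (h | rfl) <;> linarith,
      fun h => h.lt_or_eq.imp (ht x hx) Eq.symm⟩
  have hand : R.filter (fun x => x ≤ t ∧ a = x) = 0 :=
    filter_eq_nil.2 fun x _ ⟨h, hx⟩ => by linarith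
  rw [count_eq_card_filter_eq, ← card_add, filter_add_filter, hor, hand, add_zero]

lemma filter_lt_eq_of_card_filter_le_eq {P Q : Multiset ℝ} {A : ℝ}
    (h : ∀ t < A, (P.filter (· ≤ t)).card = (Q.filter (· ≤ t)).card) :
    P.filter (· < A) = Q.filter (· < A) := by
  ext a
  simp only [count_filter]
  split_ifs with ha
  · obtain ⟨t, hta, ht⟩ := (P + Q).toFinset.exists_lt_forall_lt_imp_le a
    have hP := card_filter_le_eq_add_count (R := P) hta fun x hx => ht x (by simp [hx])
    have hQ := card_filter_le_eq_add_count (R := Q) hta fun x hx => ht x (by simp [hx])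
    have := h a ha
    have := h t (hta.trans ha)
    omega
  · rfl

end Multiset

open Finset

namespace EReal

lemma le_of_add_le_add_left {x : EReal} (hbot : x ≠ ⊥) (htop : x ≠ ⊤) {a b : ℝ}
    (h : x + a ≤ x + b) : a ≤ b := by
  lift x to ℝ using ⟨htop, hbot⟩
  exact_mod_cast (add_le_add_iff_left x).1 (by exact_mod_cast h)

lemma sub_eq_sub_add_of_sub_eq {x y : EReal} {b : ℝ} (hbot : y ≠ ⊥) (htop : y ≠ ⊤)
    (h : x - y = b) (n : EReal) : x - n = y - n + b := by
  lift y to ℝ using ⟨htop, hbot⟩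
  rw [← EReal.sub_add_cancel (a := x) (b := y), h, sub_eq_add_neg, sub_eq_add_neg]
  ac_rfl

end EReal

section Filtration

variable {Λ V : Type*} [Field Λ] [AddCommGroup V] [Module Λ V] {ν : Λ → EReal} {𝒜 : V → EReal}

-- `𝒜 (-x) = 𝒜 x - ν (-1)` applied twice forces `ν (-1) = 0` as soon as `𝒜 x` is finite.
lemma filtration_neg (h𝒜_ne_top : ∀ x : V, 𝒜 x ≠ ⊤) (h𝒜_zero : ∀ x : V, 𝒜 x = ⊥ ↔ x = 0)
    (h𝒜_smul : ∀ (l : Λ) (x : V), 𝒜 (l • x) = 𝒜 x - ν l) (x : V) : 𝒜 (-x) = 𝒜 x := by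
  rcases eq_or_ne x 0 with rfl | hx
  · rw [neg_zero]
  have h₁ : 𝒜 (-x) = 𝒜 x - ν (-1) := by rw [← h𝒜_smul, neg_one_smul]
  have h₂ : 𝒜 x = 𝒜 (-x) - ν (-1) := by rw [← h𝒜_smul, neg_one_smul, neg_neg]
  lift 𝒜 x to ℝ using ⟨h𝒜_ne_top x, fun h => hx ((h𝒜_zero x).1 h)⟩ with a
  lift 𝒜 (-x) to ℝ using ⟨h𝒜_ne_top _, fun h => neg_ne_zero.2 hx ((h𝒜_zero _).1 h)⟩ with b
  generalize ν (-1) = n at h₁ h₂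
  induction n using EReal.rec with
  | bot => simp at h₁
  | top => simp at h₁
  | coe r =>
    norm_cast at h₁ h₂ ⊢
    linarith

def IsBoundaryDropLE (𝒜 : V → EReal) (d : V →ₗ[Λ] V) (t : ℝ) (U : Submodule Λ V) : Prop :=
  ∀ u ∈ U, u ≠ 0 → 𝒜 u ≤ 𝒜 (d u) + t

lemma IsBoundaryDropLE.of_filtration_shift (h𝒜_ne_top : ∀ x : V, 𝒜 x ≠ ⊤)
    (h𝒜_zero : ∀ x : V, 𝒜 x = ⊥ ↔ x = 0) (h𝒜_max : ∀ x y : V, 𝒜 (x + y) ≤ max (𝒜 x) (𝒜 y))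
    {d d₀ : V →ₗ[Λ] V} {A t : ℝ} (hM : ∀ v : V, 𝒜 ((d - d₀) v) + (A : EReal) ≤ 𝒜 v)
    (ht : t < A) {U : Submodule Λ V} (hU : IsBoundaryDropLE 𝒜 d t U) :
    IsBoundaryDropLE 𝒜 d₀ t U := by
  intro u hu hu0
  have hMu : ¬ 𝒜 u ≤ 𝒜 ((d - d₀) u) + t := by
    intro h
    have hbot : 𝒜 ((d - d₀) u) ≠ ⊥ := by
      intro h'
      rw [h', EReal.bot_add, le_bot_iff, h𝒜_zero] at h
      exact hu0 h
    exact ht.not_ge <| EReal.le_of_add_le_add_left hbot (h𝒜_ne_top _) ((hM u).trans h)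
  have hdu : 𝒜 (d u) ≤ 𝒜 (d₀ u) := by
    have h := h𝒜_max (d₀ u) ((d - d₀) u)
    rw [show d₀ u + (d - d₀) u = d u by simp] at h
    exact (le_max_iff.1 h).resolve_right fun h' => hMu ((hU u hu hu0).trans (by gcongr))
  exact (hU u hu hu0).trans (by gcongr)

end Filtration

section NormalForm

variable {Λ V : Type*} [Field Λ] [AddCommGroup V] [Module Λ V] {ν : Λ → EReal} {𝒜 : V → EReal}

lemma IsOrthFamily.le_apply_sum {ι : Type*} [Fintype ι] {e : ι → V} (he : IsOrthFamily ν 𝒜 e)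
    (c : ι → Λ) (i : ι) : 𝒜 (e i) - ν (c i) ≤ 𝒜 (∑ j, c j • e j) :=
  (he c).symm ▸ le_sup (f := fun j => 𝒜 (e j) - ν (c j)) (mem_univ i)

lemma IsOrthFamily.comp_injective {ι κ : Type*} [Fintype ι] [Fintype κ] (hν0 : ν 0 = ⊤)
    {e : ι → V} (he : IsOrthFamily ν 𝒜 e) {f : κ → ι} (hf : Function.Injective f) :
    IsOrthFamily ν 𝒜 (e ∘ f) := by
  intro c
  set c' : ι → Λ := Function.extend f c 0
  have hc' : ∀ k, c' (f k) = c k := hf.extend_apply c 0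
  have hc'_zero : ∀ i ∉ Set.range f, c' i = 0 := fun i hi =>
    Function.extend_apply' c (0 : ι → Λ) i hi
  have hsum : ∑ k, c k • (e ∘ f) k = ∑ i, c' i • e i :=
    Fintype.sum_of_injective f hf _ _ (fun i hi => by rw [hc'_zero i hi, zero_smul])
      (fun k => by rw [hc', Function.comp_apply])
  rw [hsum, he c']
  refine le_antisymm (Finset.sup_le fun i _ => ?_) (Finset.sup_le fun k _ => ?_)
  · by_cases hi : i ∈ Set.range f
    · obtain ⟨k, rfl⟩ := hi
      rw [hc']
      exact le_sup (f := fun k => 𝒜 ((e ∘ f) k) - ν (c k)) (mem_univ k)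
    · rw [hc'_zero i hi, hν0, EReal.sub_top]
      exact bot_le
  · rw [Function.comp_apply, ← hc']
    exact le_sup (f := fun i => 𝒜 (e i) - ν (c' i)) (mem_univ (f k))

structure IsNormalFormBasis (ν : Λ → EReal) (𝒜 : V → EReal) (d : V →ₗ[Λ] V) {B K : ℕ}
    (e : Fin B ⊕ Fin K ⊕ Fin K → V) (β : Fin K → ℝ) : Prop where
  linearIndependent : LinearIndependent Λ e
  span_eq_top : Submodule.span Λ (Set.range e) = ⊤
  orth : IsOrthFamily ν 𝒜 e
  map_ξ : ∀ i, d (e (Sum.inl i)) = 0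
  map_ζ : ∀ k, d (e (Sum.inr (Sum.inl k))) = e (Sum.inr (Sum.inr k))
  map_η : ∀ k, d (e (Sum.inr (Sum.inr k))) = 0
  bar : ∀ k, 𝒜 (e (Sum.inr (Sum.inl k))) - 𝒜 (e (Sum.inr (Sum.inr k))) = (β k : EReal)

namespace IsNormalFormBasis

variable {B K : ℕ} {e : Fin B ⊕ Fin K ⊕ Fin K → V} {β : Fin K → ℝ} {d : V →ₗ[Λ] V}

lemma map_sum (hb : IsNormalFormBasis ν 𝒜 d e β) (c : Fin B ⊕ Fin K ⊕ Fin K → Λ) :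
    d (∑ i, c i • e i) = ∑ k, c (Sum.inr (Sum.inl k)) • e (Sum.inr (Sum.inr k)) := by
  simp [Fintype.sum_sum_type, hb.map_ξ, hb.map_ζ, hb.map_η]

lemma filtration_ζ_sub (hb : IsNormalFormBasis ν 𝒜 d e β) (h𝒜_ne_top : ∀ x : V, 𝒜 x ≠ ⊤)
    (h𝒜_zero : ∀ x : V, 𝒜 x = ⊥ ↔ x = 0) (k : Fin K) (n : EReal) :
    𝒜 (e (Sum.inr (Sum.inl k))) - n = 𝒜 (e (Sum.inr (Sum.inr k))) - n + β k :=
  EReal.sub_eq_sub_add_of_sub_eq (fun h => hb.linearIndependent.ne_zero _ ((h𝒜_zero _).1 h))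
    (h𝒜_ne_top _) (hb.bar k) n

lemma exists_isBoundaryDropLE_finrank_eq (hb : IsNormalFormBasis ν 𝒜 d e β) (hν0 : ν 0 = ⊤)
    (h𝒜_ne_top : ∀ x : V, 𝒜 x ≠ ⊤) (h𝒜_zero : ∀ x : V, 𝒜 x = ⊥ ↔ x = 0) (t : ℝ) :
    ∃ U : Submodule Λ V, IsBoundaryDropLE 𝒜 d t U ∧
      Module.finrank Λ U = Fintype.card {k // β k ≤ t} := by
  let ζ : {k // β k ≤ t} → Fin B ⊕ Fin K ⊕ Fin K := fun k => Sum.inr (Sum.inl k.1)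
  let η : {k // β k ≤ t} → Fin B ⊕ Fin K ⊕ Fin K := fun k => Sum.inr (Sum.inr k.1)
  have hζ_inj : Function.Injective ζ := fun k l h => by simpa [ζ, Subtype.ext_iff] using h
  have hη_inj : Function.Injective η := fun k l h => by simpa [η, Subtype.ext_iff] using h
  refine ⟨Submodule.span Λ (Set.range (e ∘ ζ)), fun u hu hu0 => ?_,
    finrank_span_eq_card (hb.linearIndependent.comp ζ hζ_inj)⟩
  obtain ⟨c, rfl⟩ := (Submodule.mem_span_range_iff_exists_fun Λ).1 hu
  have hdu : d (∑ k, c k • (e ∘ ζ) k) = ∑ k, c k • (e ∘ η) k := by simp [ζ, η, hb.map_ζ]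
  rw [hdu, hb.orth.comp_injective hν0 hζ_inj c]
  refine Finset.sup_le fun k _ => ?_
  calc 𝒜 (e (ζ k)) - ν (c k) = 𝒜 (e (η k)) - ν (c k) + β k :=
        hb.filtration_ζ_sub h𝒜_ne_top h𝒜_zero k _
    _ ≤ 𝒜 (e (η k)) - ν (c k) + t := by gcongr; exact_mod_cast k.2
    _ ≤ 𝒜 (∑ k, c k • (e ∘ η) k) + t := by
        gcongr
        exact (hb.orth.comp_injective hν0 hη_inj).le_apply_sum c k

lemma exists_coeff_ne_zero_of_drop_le (hb : IsNormalFormBasis ν 𝒜 d e β) (hν0 : ν 0 = ⊤)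
    (h𝒜_ne_top : ∀ x : V, 𝒜 x ≠ ⊤) (h𝒜_zero : ∀ x : V, 𝒜 x = ⊥ ↔ x = 0) {t : ℝ}
    (c : Fin B ⊕ Fin K ⊕ Fin K → Λ) (hu0 : ∑ i, c i • e i ≠ 0)
    (hdrop : 𝒜 (∑ i, c i • e i) ≤ 𝒜 (d (∑ i, c i • e i)) + t) :
    ∃ k, β k ≤ t ∧ c (Sum.inr (Sum.inl k)) ≠ 0 := by
  have hdu_bot : 𝒜 (d (∑ i, c i • e i)) ≠ ⊥ := fun h =>
    hu0 <| (h𝒜_zero _).1 <| le_bot_iff.1 <| hdrop.trans_eq <| by rw [h, EReal.bot_add]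
  have hdu_top := h𝒜_ne_top (d (∑ i, c i • e i))
  have hη_inj : Function.Injective fun k : Fin K => (Sum.inr (Sum.inr k) : Fin B ⊕ Fin K ⊕ Fin K) :=
    fun k l h => by simpa using h
  have horth := hb.orth.comp_injective hν0 hη_inj fun k => c (Sum.inr (Sum.inl k))
  simp only [Function.comp_apply] at horth
  rw [hb.map_sum, horth] at hdrop hdu_bot hdu_top
  have hK : (univ : Finset (Fin K)).Nonempty := by
    by_contra hK
    rw [not_nonempty_iff_eq_empty.1 hK, sup_empty] at hdu_bot
    exact hdu_bot rfl
  obtain ⟨k, -, hk⟩ := exists_mem_eq_sup univ hK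
    fun k => 𝒜 (e (Sum.inr (Sum.inr k))) - ν (c (Sum.inr (Sum.inl k)))
  rw [hk] at hdrop hdu_bot hdu_top
  refine ⟨k, ?_, fun hck => hdu_bot (by rw [hck, hν0, EReal.sub_top])⟩
  have hζ_le := (hb.orth.le_apply_sum c (Sum.inr (Sum.inl k))).trans hdrop
  rw [hb.filtration_ζ_sub h𝒜_ne_top h𝒜_zero] at hζ_le
  exact EReal.le_of_add_le_add_left hdu_bot hdu_top hζ_le

lemma finrank_le_of_isBoundaryDropLE (hb : IsNormalFormBasis ν 𝒜 d e β) (hν0 : ν 0 = ⊤)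
    (h𝒜_ne_top : ∀ x : V, 𝒜 x ≠ ⊤) (h𝒜_zero : ∀ x : V, 𝒜 x = ⊥ ↔ x = 0) {t : ℝ} {U : Submodule Λ V}
    (hU : IsBoundaryDropLE 𝒜 d t U) : Module.finrank Λ U ≤ Fintype.card {k // β k ≤ t} := by
  let b := Module.Basis.mk hb.linearIndependent hb.span_eq_top.ge
  let χ : U →ₗ[Λ] {k // β k ≤ t} → Λ :=
    LinearMap.pi fun k => (b.coord (Sum.inr (Sum.inl k.1))).domRestrict U
  have hχ : Function.Injective χ := by
    rw [← LinearMap.ker_eq_bot, Submodule.eq_bot_iff]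
    intro u hu
    by_contra hu0
    have hrepr : ∑ i, b.repr u i • e i = u := by
      simpa only [b, Module.Basis.coe_mk] using b.sum_repr u
    have hu0' : ∑ i, b.repr u i • e i ≠ 0 := by
      rw [hrepr]
      exact Subtype.coe_ne_coe.2 hu0
    obtain ⟨k, hk, hck⟩ := hb.exists_coeff_ne_zero_of_drop_le hν0 h𝒜_ne_top h𝒜_zero (b.repr u)
      hu0' (hrepr ▸ hU u u.2 (hrepr ▸ hu0'))
    exact hck (congr_fun hu ⟨k, hk⟩)
  simpa using LinearMap.finrank_le_finrank_of_injective hχ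

end IsNormalFormBasis

lemma IsBarSpectrum.isGreatest_finrank (hν0 : ν 0 = ⊤) (h𝒜_ne_top : ∀ x : V, 𝒜 x ≠ ⊤)
    (h𝒜_zero : ∀ x : V, 𝒜 x = ⊥ ↔ x = 0) {d : V →ₗ[Λ] V} (hd2 : d ∘ₗ d = 0)
    {S : Multiset ℝ} (hS : IsBarSpectrum ν 𝒜 d S) (t : ℝ) :
    IsGreatest {n | ∃ U : Submodule Λ V, IsBoundaryDropLE 𝒜 d t U ∧ Module.finrank Λ U = n}
      (S.filter (· ≤ t)).card := by
  obtain ⟨B, K, e, β, hli, hspan, he, hξ, hζ, hβ, rfl⟩ := hS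
  have hη : ∀ k, d (e (Sum.inr (Sum.inr k))) = 0 := fun k => by
    rw [← hζ k, ← LinearMap.comp_apply, hd2, LinearMap.zero_apply]
  have hb : IsNormalFormBasis ν 𝒜 d e β := ⟨hli, hspan, he, hξ, hζ, hη, hβ⟩
  have hcard : ((univ.val.map β).filter (· ≤ t)).card = Fintype.card {k // β k ≤ t} := by
    rw [Multiset.filter_map, Multiset.card_map, Fintype.card_subtype]
    rfl
  rw [hcard]
  exact ⟨hb.exists_isBoundaryDropLE_finrank_eq hν0 h𝒜_ne_top h𝒜_zero t,
    fun n ⟨U, hU, hn⟩ => hn ▸ hb.finrank_le_of_isBoundaryDropLE hν0 h𝒜_ne_top h𝒜_zero hU⟩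

end NormalForm

theorem barLength_spectra_agree_below_deformation_level_general
    {Λ V : Type*} [Field Λ] [AddCommGroup V] [Module Λ V]
    (ν : Λ → EReal)
    (hν_zero : ∀ x : Λ, ν x = ⊤ ↔ x = 0)
    (𝒜 : V → EReal)
    (h𝒜_ne_top : ∀ x : V, 𝒜 x ≠ ⊤)
    (h𝒜_zero : ∀ x : V, 𝒜 x = ⊥ ↔ x = 0)
    (h𝒜_smul : ∀ (l : Λ) (x : V), 𝒜 (l • x) = 𝒜 x - ν l)
    (h𝒜_max : ∀ x y : V, 𝒜 (x + y) ≤ max (𝒜 x) (𝒜 y))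
    (d d₀ : V →ₗ[Λ] V)
    (hd2 : d ∘ₗ d = 0) (hd02 : d₀ ∘ₗ d₀ = 0)
    (A : ℝ)
    (hM : ∀ v : V, 𝒜 ((d - d₀) v) + (A : EReal) ≤ 𝒜 v)
    (S S₀ : Multiset ℝ)
    (hS : IsBarSpectrum ν 𝒜 d S) (hS₀ : IsBarSpectrum ν 𝒜 d₀ S₀) :
    S.filter (fun b => b < A) = S₀.filter (fun b => b < A) := by
  have hν0 : ν 0 = ⊤ := (hν_zero 0).2 rfl
  have hM' : ∀ v : V, 𝒜 ((d₀ - d) v) + (A : EReal) ≤ 𝒜 v := fun v => by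
    rw [← neg_sub, LinearMap.neg_apply, filtration_neg h𝒜_ne_top h𝒜_zero h𝒜_smul]
    exact hM v
  have hdrop : ∀ t < A, ∀ U, IsBoundaryDropLE 𝒜 d t U ↔ IsBoundaryDropLE 𝒜 d₀ t U :=
    fun t ht U => ⟨.of_filtration_shift h𝒜_ne_top h𝒜_zero h𝒜_max hM ht,
      .of_filtration_shift h𝒜_ne_top h𝒜_zero h𝒜_max hM' ht⟩
  refine Multiset.filter_lt_eq_of_card_filter_le_eq fun t ht => ?_
  refine (hS.isGreatest_finrank hν0 h𝒜_ne_top h𝒜_zero hd2 t).unique ?_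
  simpa only [hdrop t ht] using hS₀.isGreatest_finrank hν0 h𝒜_ne_top h𝒜_zero hd02 t

/-- If two filtered differentials `d = d₀ + M` on the same filtered
finite-dimensional space over a non-Archimedean field differ by a term `M` of filtration
shift at least `A > 0`, then their bar-length spectra coincide below `A`. -/
theorem barLength_spectra_agree_below_deformation_level
    {Λ V : Type*} [Field Λ] [AddCommGroup V] [Module Λ V] [FiniteDimensional Λ V]
    (ν : Λ → EReal)
    (hν_ne_bot : ∀ x : Λ, ν x ≠ ⊥)
    (hν_zero : ∀ x : Λ, ν x = ⊤ ↔ x = 0)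
    (hν_mul : ∀ x y : Λ, ν (x * y) = ν x + ν y)
    (hν_add : ∀ x y : Λ, min (ν x) (ν y) ≤ ν (x + y))
    (𝒜 : V → EReal)
    (h𝒜_ne_top : ∀ x : V, 𝒜 x ≠ ⊤)
    (h𝒜_zero : ∀ x : V, 𝒜 x = ⊥ ↔ x = 0)
    (h𝒜_smul : ∀ (l : Λ) (x : V), 𝒜 (l • x) = 𝒜 x - ν l)
    (h𝒜_max : ∀ x y : V, 𝒜 (x + y) ≤ max (𝒜 x) (𝒜 y))
    (d d₀ : V →ₗ[Λ] V)
    (hd2 : d ∘ₗ d = 0) (hd02 : d₀ ∘ₗ d₀ = 0)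
    (hd_filt : ∀ x : V, 𝒜 (d x) ≤ 𝒜 x) (hd0_filt : ∀ x : V, 𝒜 (d₀ x) ≤ 𝒜 x)
    (A : ℝ) (hA : 0 < A)
    (hM : ∀ v : V, 𝒜 ((d - d₀) v) + (A : EReal) ≤ 𝒜 v)
    (S S₀ : Multiset ℝ)
    (hS : IsBarSpectrum ν 𝒜 d S) (hS₀ : IsBarSpectrum ν 𝒜 d₀ S₀) :
    S.filter (fun b => b < A) = S₀.filter (fun b => b < A) :=
  barLength_spectra_agree_below_deformation_level_general ν hν_zero 𝒜 h𝒜_ne_top h𝒜_zero h𝒜_smul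
    h𝒜_max d d₀ hd2 hd02 A hM S S₀ hS hS₀
end

section
/- In the setting of the previous lemma, the homology classes [x₁],...,[x_B] form an orthogonal basis of H(C, d) with respect to the induced filtration H(𝒜)(α) = inf{𝒜(c) : [c] = α}; that is, H(𝒜)(Σ λ_j [x_j]) = max_j (H(𝒜)([x_j]) - ν(λ_j)). -/
/-- The homology of a differential `d : C → C`, as `ker d / (im d ∩ ker d)`. -/
abbrev Hgy {Λ C : Type*} [Field Λ] [AddCommGroup C] [Module Λ C] (d : C →ₗ[Λ] C) :=
  LinearMap.ker d ⧸
    (Submodule.comap (LinearMap.ker d).subtype (LinearMap.range d))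

/-- The induced filtration on homology: infimum of `𝒜` over representatives. -/
noncomputable def inducedFiltration {Λ C : Type*} [Field Λ] [AddCommGroup C] [Module Λ C]
    (d : C →ₗ[Λ] C) (𝒜 : C → EReal) : Hgy d → EReal :=
  fun h => sInf {r : EReal | ∃ x : LinearMap.ker d,
    Submodule.Quotient.mk x = h ∧ 𝒜 (x : C) = r}

lemma sup_sub_valuation_sumElim_zero {Λ ι κ : Type*} [Zero Λ] [Fintype ι] [Fintype κ]
    {ν : Λ → EReal} (hν : ν 0 = ⊤) (a : ι ⊕ κ → EReal) (lam : ι → Λ) :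
    (Finset.univ.sup fun j => a j - ν (Sum.elim lam 0 j)) =
      Finset.univ.sup fun i => a (Sum.inl i) - ν (lam i) := by
  rw [← Finset.univ_disjSum_univ, Finset.sup_disjSum]
  simp [hν, EReal.sub_top]

namespace IsOrthFamily

variable {Λ V ι κ : Type*} [Field Λ] [AddCommGroup V] [Module Λ V] [Fintype ι] [Fintype κ]
  {ν : Λ → EReal} {𝒜 : V → EReal}

lemma comp_inl (hν : ν 0 = ⊤) {e : ι ⊕ κ → V} (he : IsOrthFamily ν 𝒜 e) :
    IsOrthFamily ν 𝒜 (e ∘ Sum.inl) := by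
  intro lam
  have hsum : ∑ j, Sum.elim lam 0 j • e j = ∑ i, lam i • e (Sum.inl i) := by
    simp [Fintype.sum_sum_type]
  have := he (Sum.elim lam 0)
  rwa [hsum, sup_sub_valuation_sumElim_zero hν] at this

end IsOrthFamily

namespace Module.Basis

variable {Λ V ι κ : Type*} [Field Λ] [AddCommGroup V] [Module Λ V] (b : Basis (ι ⊕ κ) Λ V)

noncomputable def projInl : V →ₗ[Λ] V :=
  b.constr Λ (Sum.elim (b ∘ Sum.inl) 0)

@[simp]
lemma projInl_inl (i : ι) : b.projInl (b (Sum.inl i)) = b (Sum.inl i) := by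
  simp [projInl]

@[simp]
lemma projInl_inr (j : κ) : b.projInl (b (Sum.inr j)) = 0 := by
  simp [projInl]

variable [Fintype ι] [Fintype κ]

lemma projInl_apply (v : V) : b.projInl v = ∑ i, b.repr v (Sum.inl i) • b (Sum.inl i) := by
  conv_lhs => rw [← b.sum_repr v, map_sum]
  simp only [map_smul, Fintype.sum_sum_type, projInl_inl, projInl_inr, smul_zero,
    Finset.sum_const_zero, add_zero]

lemma filtration_projInl_le {ν : Λ → EReal} {𝒜 : V → EReal} (hν : ν 0 = ⊤)
    (hb : IsOrthFamily ν 𝒜 b) (v : V) : 𝒜 (b.projInl v) ≤ 𝒜 v := by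
  conv_rhs => rw [← b.sum_repr v, hb, ← Finset.univ_disjSum_univ, Finset.sup_disjSum]
  rw [projInl_apply]
  exact (hb.comp_inl hν _).le.trans le_sup_left

end Module.Basis

lemma inducedFiltration_mk_of_projection {Λ C : Type*} [Field Λ] [AddCommGroup C] [Module Λ C]
    {d : C →ₗ[Λ] C} {𝒜 : C → EReal} {π : C →ₗ[Λ] C} (hπd : π ∘ₗ d = 0)
    (hπ𝒜 : ∀ c, 𝒜 (π c) ≤ 𝒜 c) (x : LinearMap.ker d) (hx : π x = x) :
    inducedFiltration d 𝒜 (Submodule.Quotient.mk x) = 𝒜 x := by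
  refine le_antisymm (sInf_le ⟨x, rfl, rfl⟩) (le_sInf ?_)
  rintro _ ⟨c, hcx, rfl⟩
  obtain ⟨v, hv⟩ := (Submodule.Quotient.eq _).mp hcx
  have hπc : π c = x := by
    have hc : (c : C) = x + d v := by rw [hv]; simp
    rw [hc, map_add, hx, ← LinearMap.comp_apply, hπd, LinearMap.zero_apply, add_zero]
  exact hπc ▸ hπ𝒜 c

theorem homology_classes_orthogonal_for_induced_filtration_general
    {Λ C : Type*} [Field Λ] [AddCommGroup C] [Module Λ C]
    (ν : Λ → EReal)
    (hν_zero : ∀ x : Λ, ν x = ⊤ ↔ x = 0)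
    (𝒜 : C → EReal)
    (B K : ℕ) (b : Module.Basis (Fin B ⊕ Fin K ⊕ Fin K) Λ C)
    (hortho : IsOrthFamily ν 𝒜 ⇑b)
    (d : C →ₗ[Λ] C)
    (Tp : ℝ → Λ)
    (β : Fin K → ℝ)
    (hdx : ∀ i : Fin B, d (b (Sum.inl i)) = 0)
    (hdy : ∀ j : Fin K,
      d (b (Sum.inr (Sum.inl j))) = Tp (β j) • b (Sum.inr (Sum.inr j)))
    (hdz : ∀ j : Fin K, d (b (Sum.inr (Sum.inr j))) = 0) :
    ∀ lam : Fin B → Λ,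
      inducedFiltration d 𝒜
          (∑ i : Fin B, lam i •
            (Submodule.Quotient.mk
              (⟨b (Sum.inl i), LinearMap.mem_ker.mpr (hdx i)⟩ : LinearMap.ker d) :
              Hgy d))
        = Finset.univ.sup fun i =>
            inducedFiltration d 𝒜
              (Submodule.Quotient.mk
                (⟨b (Sum.inl i), LinearMap.mem_ker.mpr (hdx i)⟩ : LinearMap.ker d))
              - ν (lam i) := by
  intro lam
  have hν : ν 0 = ⊤ := (hν_zero 0).mpr rfl
  have hπd : b.projInl ∘ₗ d = 0 := by
    refine b.ext fun j => ?_
    rcases j with i | j | j <;> simp [hdx, hdy, hdz]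
  have filtration_mk := inducedFiltration_mk_of_projection hπd (b.filtration_projInl_le hν hortho)
  have hsum : ∑ i, lam i • (Submodule.Quotient.mk ⟨b (Sum.inl i), _⟩ : Hgy d) =
      Submodule.Quotient.mk (∑ i, lam i • ⟨b (Sum.inl i), LinearMap.mem_ker.mpr (hdx i)⟩) :=
    (map_sum (Submodule.mkQ _) _ _).symm
  have filtration_mk_inl (i : Fin B) : inducedFiltration d 𝒜
      (Submodule.Quotient.mk ⟨b (Sum.inl i), LinearMap.mem_ker.mpr (hdx i)⟩) = 𝒜 (b (Sum.inl i)) :=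
    filtration_mk ⟨_, _⟩ (b.projInl_inl i)
  rw [hsum, filtration_mk _ ?_]
  · simp only [filtration_mk_inl, Submodule.coe_sum, Submodule.coe_smul]
    exact hortho.comp_inl hν lam
  · simp only [Submodule.coe_sum, Submodule.coe_smul, map_sum, map_smul, b.projInl_inl]

/-- For an orthogonal normal-form basis `(x's, y's, z's)` of a filtered
complex with `d xᵢ = 0`, `d yⱼ = T^{βⱼ} zⱼ`, `d zⱼ = 0`, the homology classes `[xᵢ]`
form an orthogonal basis of `H(C, d)` for the induced filtration `H(𝒜)`. -/
theorem homology_classes_orthogonal_for_induced_filtration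
    {Λ C : Type*} [Field Λ] [AddCommGroup C] [Module Λ C]
    (ν : Λ → EReal)
    (hν_ne_bot : ∀ x : Λ, ν x ≠ ⊥)
    (hν_zero : ∀ x : Λ, ν x = ⊤ ↔ x = 0)
    (hν_mul : ∀ x y : Λ, ν (x * y) = ν x + ν y)
    (hν_add : ∀ x y : Λ, min (ν x) (ν y) ≤ ν (x + y))
    (𝒜 : C → EReal)
    (h𝒜_ne_top : ∀ x : C, 𝒜 x ≠ ⊤)
    (h𝒜_zero : ∀ x : C, 𝒜 x = ⊥ ↔ x = 0)
    (h𝒜_smul : ∀ (l : Λ) (x : C), 𝒜 (l • x) = 𝒜 x - ν l)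
    (h𝒜_max : ∀ x y : C, 𝒜 (x + y) ≤ max (𝒜 x) (𝒜 y))
    (B K : ℕ) (b : Module.Basis (Fin B ⊕ Fin K ⊕ Fin K) Λ C)
    (hortho : IsOrthFamily ν 𝒜 ⇑b)
    (d : C →ₗ[Λ] C) (hd2 : d ∘ₗ d = 0) (hd_filt : ∀ x : C, 𝒜 (d x) ≤ 𝒜 x)
    (Tp : ℝ → Λ) (hTp : ∀ r : ℝ, ν (Tp r) = (r : EReal))
    (β : Fin K → ℝ)
    (hdx : ∀ i : Fin B, d (b (Sum.inl i)) = 0)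
    (hdy : ∀ j : Fin K,
      d (b (Sum.inr (Sum.inl j))) = Tp (β j) • b (Sum.inr (Sum.inr j)))
    (hdz : ∀ j : Fin K, d (b (Sum.inr (Sum.inr j))) = 0) :
    ∀ lam : Fin B → Λ,
      inducedFiltration d 𝒜
          (∑ i : Fin B, lam i •
            (Submodule.Quotient.mk
              (⟨b (Sum.inl i), LinearMap.mem_ker.mpr (hdx i)⟩ : LinearMap.ker d) :
              Hgy d))
        = Finset.univ.sup fun i =>
            inducedFiltration d 𝒜
              (Submodule.Quotient.mk
                (⟨b (Sum.inl i), LinearMap.mem_ker.mpr (hdx i)⟩ : LinearMap.ker d))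
              - ν (lam i) :=
  homology_classes_orthogonal_for_induced_filtration_general ν hν_zero 𝒜 B K b hortho d Tp β hdx hdy
    hdz
end
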